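/- If ν : (0, ∞) → ℂ is bounded, measurable, and ν(t) → L as t → ∞, then the Laplace transform satisfies lim_{s → 0⁺} s · ∫₀^∞ ν(t) e^{−st} dt = L. -/

import Mathlib

/-!
The substitution `u = s t` turns `s · ∫₀^∞ ν(t) e^{-st} dt` into `∫₀^∞ ν(u/s) e^{-u} du`.
As `s → 0⁺` the integrand tends pointwise to `L e^{-u}` and is dominated by `C e^{-u}`,
so dominated convergence gives the limit `L ∫₀^∞ e^{-u} du = L`.
-/

open MeasureTheory Filter Set Topology

theorem integral_Ioi_cexp_neg : ∫ u in Ioi (0 : ℝ), Complex.exp (-(u : ℂ)) = 1 := by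
  have h : ∀ u : ℝ, Complex.exp (-(u : ℂ)) = ((Real.exp (-u) : ℝ) : ℂ) := fun u => by
    rw [Complex.ofReal_exp, Complex.ofReal_neg]
  simp_rw [h]
  rw [← Complex.ofReal_one, ← integral_exp_neg_Ioi_zero]
  exact integral_ofReal

theorem integrableOn_Ioi_cexp_neg : IntegrableOn (fun u : ℝ => Complex.exp (-(u : ℂ))) (Ioi 0) :=
  .of_integral_ne_zero (by rw [integral_Ioi_cexp_neg]; exact one_ne_zero)

theorem mul_integral_Ioi_mul_cexp_neg_mul (f : ℝ → ℂ) {s : ℝ} (hs : 0 < s) :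
    (s : ℂ) * ∫ t in Ioi (0 : ℝ), f t * Complex.exp (-(s : ℂ) * t)
      = ∫ u in Ioi (0 : ℝ), f (u / s) * Complex.exp (-(u : ℂ)) := by
  have h := integral_comp_mul_left_Ioi (fun u : ℝ => f (u / s) * Complex.exp (-(u : ℂ))) 0 hs
  rw [mul_zero] at h
  have hcongr : ∫ t in Ioi (0 : ℝ), f (s * t / s) * Complex.exp (-((s * t : ℝ) : ℂ))
      = ∫ t in Ioi (0 : ℝ), f t * Complex.exp (-(s : ℂ) * t) := by
    refine setIntegral_congr_fun measurableSet_Ioi fun t _ => ?_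
    rw [mul_div_cancel_left₀ _ hs.ne', Complex.ofReal_mul, neg_mul]
  rw [← hcongr, h, Complex.real_smul, ← mul_assoc, Complex.ofReal_inv,
    mul_inv_cancel₀ (by exact_mod_cast hs.ne'), one_mul]

theorem tendsto_integral_Ioi_comp_div_mul {f g : ℝ → ℂ} {C : ℝ} {L : ℂ} (hf : Measurable f)
    (hC : ∀ t > 0, ‖f t‖ ≤ C) (hlim : Tendsto f atTop (𝓝 L)) (hg : IntegrableOn g (Ioi 0)) :
    Tendsto (fun s : ℝ => ∫ u in Ioi (0 : ℝ), f (u / s) * g u) (𝓝[>] 0)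
      (𝓝 (L * ∫ u in Ioi (0 : ℝ), g u)) := by
  rw [← integral_const_mul]
  refine tendsto_integral_filter_of_dominated_convergence (fun u => C * ‖g u‖) ?_ ?_
    (hg.norm.const_mul C) ?_
  · exact .of_forall fun s =>
      ((hf.comp (measurable_id.div_const s)).aestronglyMeasurable).mul hg.aestronglyMeasurable
  · filter_upwards [self_mem_nhdsWithin] with s hs
    filter_upwards [ae_restrict_mem measurableSet_Ioi] with u hu
    rw [norm_mul]
    exact mul_le_mul_of_nonneg_right (hC _ (div_pos hu hs)) (norm_nonneg _)
  · filter_upwards [ae_restrict_mem measurableSet_Ioi] with u hu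
    have hdiv : Tendsto (fun s : ℝ => u / s) (𝓝[>] 0) atTop := by
      simpa only [div_eq_mul_inv] using tendsto_inv_nhdsGT_zero.const_mul_atTop hu
    exact (hlim.comp hdiv).mul_const _

/-- Abelian theorem for the Laplace transform: if ν : (0,∞) → ℂ is bounded, measurable and
ν(t) → L as t → ∞, then s·∫₀^∞ ν(t)e^{−st} dt → L as s → 0⁺. -/
theorem laplace_abelian (ν : ℝ → ℂ) (L : ℂ)
    (hmeas : Measurable ν)
    (hbdd : ∃ C : ℝ, ∀ t > (0 : ℝ), ‖ν t‖ ≤ C)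
    (hlim : Tendsto ν atTop (nhds L)) :
    Tendsto (fun s : ℝ => (s : ℂ) * ∫ t in Set.Ioi (0 : ℝ), ν t * Complex.exp (-(s : ℂ) * t))
      (nhdsWithin 0 (Set.Ioi 0)) (nhds L) := by
  obtain ⟨C, hC⟩ := hbdd
  have hsubst := tendsto_integral_Ioi_comp_div_mul hmeas hC hlim integrableOn_Ioi_cexp_neg
  rw [integral_Ioi_cexp_neg, mul_one] at hsubst
  refine hsubst.congr' ?_
  filter_upwards [self_mem_nhdsWithin] with s hs
  exact (mul_integral_Ioi_mul_cexp_neg_mul ν hs).symm
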